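/- If f is analytic on an open set containing a compact interval [0, Λ] ⊂ ℝ and is bounded there, then for each n there exists a rational function r_n of degree at most n (ratio of polynomials of degrees ≤ n+1 and ≤ n) with sup_{λ ∈ [0,Λ]} |f(λ) − r_n(λ)| ≤ C q^n for some constants C > 0 and 0 < q < 1 independent of n; in particular polynomials of degree n already achieve this bound, so rational functions do too. -/

import Mathlib

/-!
Substituting `x = Λ (1 + cos θ) / 2` turns `f` into a `2π`-periodic function of `θ` which,
since `cos` maps a thin strip `|Im θ| ≤ η` into the neighbourhood of the interval, is holomorphic
and bounded there. Shifting the contour of its `k`-th Fourier coefficient to `Im θ = ∓η` gives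
`|a_k| ≤ M e^{-η|k|}`. As `cos (k θ) = T_k (cos θ)`, the truncated Fourier series is a polynomial
of degree `≤ n` in `x` (the truncated Chebyshev series), with error bounded by the geometric tail.
-/

open Complex Polynomial Set Function
open scoped Real

theorem Function.Periodic.exists_strip_mapsTo {X : Type*} [TopologicalSpace X] {Ψ : ℂ → X}
    {T : ℝ} (hper : Periodic Ψ T) (hT : 0 < T) (hΨ : Continuous Ψ) {U : Set X}
    (hU : IsOpen U) (hreal : ∀ t : ℝ, Ψ t ∈ U) : ∃ η > 0, ∀ z : ℂ, |z.im| ≤ η → Ψ z ∈ U := by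
  obtain ⟨δ, hδ, hthick⟩ := ((isCompact_Icc (a := 0) (b := T)).image continuous_ofReal
    ).exists_thickening_subset_open (hU.preimage hΨ) (by rintro _ ⟨t, -, rfl⟩; exact hreal t)
  refine ⟨δ / 2, half_pos hδ, fun z hz => ?_⟩
  have hper' : Periodic (fun r : ℝ => Ψ (r + z.im * I)) T := fun r => by
    simpa [add_right_comm] using hper (r + z.im * I)
  obtain ⟨y, hy, hzy⟩ := hper'.exists_mem_Ico₀ hT z.re
  have hmem : (y : ℂ) + z.im * I ∈ Metric.thickening δ (ofReal '' Icc 0 T) := by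
    refine Metric.mem_thickening_iff.2 ⟨y, ⟨y, Ico_subset_Icc_self hy, rfl⟩, ?_⟩
    rw [dist_eq, add_sub_cancel_left, norm_mul, norm_I, mul_one, norm_real, Real.norm_eq_abs]
    linarith
  rw [← re_add_im z]
  exact hzy ▸ hthick hmem

theorem Function.Periodic.intervalIntegral_add_mul_I_eq {E : Type*} [NormedAddCommGroup E]
    [NormedSpace ℂ E] [CompleteSpace E] {Φ : ℂ → E} {T : ℝ} (hper : Periodic Φ T) {η : ℝ}
    (hΦ : ∀ z : ℂ, z.im ∈ uIcc 0 η → DifferentiableAt ℂ Φ z) :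
    ∫ x in (0 : ℝ)..T, Φ (x + η * I) = ∫ x in (0 : ℝ)..T, Φ x := by
  have hrect := integral_boundary_rect_eq_zero_of_differentiableOn Φ 0 ⟨T, η⟩
    fun z hz => (hΦ z (mem_reProdIm.1 hz).2).differentiableWithinAt
  have hsides : ∫ y in (0 : ℝ)..η, Φ (T + y * I) = ∫ y in (0 : ℝ)..η, Φ (0 + y * I) :=
    intervalIntegral.integral_congr fun y _ => by simpa [add_comm] using hper (y * I)
  simp only [zero_re, zero_im, ofReal_zero, zero_mul, add_zero] at hrect
  rw [hsides, add_sub_cancel_right, sub_eq_zero] at hrect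
  exact hrect.symm

instance fact_two_pi_pos : Fact (0 < 2 * π) := ⟨Real.two_pi_pos⟩

theorem norm_fourierCoeff_le_of_strip {F : ℂ → ℂ} (hper : Periodic F (2 * π)) {η M : ℝ}
    (hF : ∀ z : ℂ, |z.im| ≤ η → DifferentiableAt ℂ F z) (hM : ∀ z : ℂ, |z.im| ≤ η → ‖F z‖ ≤ M)
    {g : AddCircle (2 * π) → ℂ} (hg : ∀ t : ℝ, g t = F t) (k : ℤ) {s : ℝ} (hs : |s| ≤ η) :
    ‖fourierCoeff g k‖ ≤ M * Real.exp (k * s) := by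
  set Φ : ℂ → ℂ := fun z => exp (-(k * z * I)) * F z
  have hΦper : Periodic Φ ((2 * π : ℝ) : ℂ) := fun z => by
    have harg : -(k * (z + (2 * π : ℝ)) * I) = -(k * z * I) + (-k : ℤ) * (2 * π * I) := by
      push_cast; ring
    have hFz : F (z + (2 * π : ℝ)) = F z := by simpa using hper z
    simp only [Φ]
    rw [harg, exp_add, exp_int_mul_two_pi_mul_I, mul_one, hFz]
  have hcoeff : fourierCoeff g k = (1 / (2 * π) : ℝ) • ∫ x in (0 : ℝ)..2 * π, Φ x := by
    rw [fourierCoeff_eq_intervalIntegral g k 0, zero_add]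
    congr 1
    refine intervalIntegral.integral_congr fun x _ => ?_
    have : 2 * π * I * ((-k : ℤ) : ℂ) * x / (2 * π : ℝ) = -(k * x * I) := by
      push_cast; field_simp
    rw [fourier_coe_apply, hg, smul_eq_mul, this]
  have hstrip : ∀ x : ℝ, ‖Φ (x + s * I)‖ ≤ M * Real.exp (k * s) := fun x => by
    have him : |(x + s * I : ℂ).im| ≤ η := by simpa using hs
    rw [norm_mul, norm_exp, mul_comm M]
    gcongr
    · simp
    · exact hM _ him
  have hdiff : ∀ z : ℂ, z.im ∈ uIcc 0 s → DifferentiableAt ℂ Φ z := fun z hz =>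
    (by fun_prop : DifferentiableAt ℂ (fun z : ℂ => exp (-(k * z * I))) z).mul
      (hF z (le_trans (by simpa using abs_sub_left_of_mem_uIcc hz) hs))
  rw [hcoeff, ← hΦper.intervalIntegral_add_mul_I_eq hdiff, norm_smul,
    Real.norm_of_nonneg (by positivity)]
  calc 1 / (2 * π) * ‖∫ x in (0 : ℝ)..2 * π, Φ (x + s * I)‖
      ≤ 1 / (2 * π) * (M * Real.exp (k * s) * |2 * π - 0|) := by
        gcongr
        exact intervalIntegral.norm_integral_le_of_norm_le_const fun x _ => hstrip x
    _ = M * Real.exp (k * s) := by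
        rw [sub_zero, abs_of_pos Real.two_pi_pos]
        field_simp

theorem norm_fourierCoeff_le_exp_neg_pow {F : ℂ → ℂ} (hper : Periodic F (2 * π)) {η M : ℝ}
    (hη : 0 ≤ η) (hF : ∀ z : ℂ, |z.im| ≤ η → DifferentiableAt ℂ F z)
    (hM : ∀ z : ℂ, |z.im| ≤ η → ‖F z‖ ≤ M) {g : AddCircle (2 * π) → ℂ}
    (hg : ∀ t : ℝ, g t = F t) (k : ℤ) :
    ‖fourierCoeff g k‖ ≤ M * Real.exp (-η) ^ k.natAbs := by
  obtain ⟨s, hs, hks⟩ : ∃ s : ℝ, |s| ≤ η ∧ (k : ℝ) * s = k.natAbs * -η := by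
    rcases le_or_gt 0 k with hk | hk
    · refine ⟨-η, by rw [abs_neg, abs_of_nonneg hη], ?_⟩
      rw [Nat.cast_natAbs, Int.cast_abs, abs_of_nonneg (by exact_mod_cast hk)]
    · refine ⟨η, by rw [abs_of_nonneg hη], ?_⟩
      rw [Nat.cast_natAbs, Int.cast_abs, abs_of_neg (by exact_mod_cast hk)]
      ring
  rw [← Real.exp_nat_mul, ← hks]
  exact norm_fourierCoeff_le_of_strip hper hF hM hg k hs

theorem summable_pow_natAbs {q : ℝ} (hq0 : 0 ≤ q) (hq1 : q < 1) :
    Summable fun k : ℤ => q ^ k.natAbs :=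
  .of_nat_of_neg (by simpa using summable_geometric_of_lt_one hq0 hq1)
    (by simpa using summable_geometric_of_lt_one hq0 hq1)

theorem hasSum_fourierCoeff_mul_cos {f : ℂ → ℂ} {g : C(AddCircle (2 * π), ℂ)}
    (hg : ∀ t : ℝ, g t = f (cos t)) (hsum : Summable (fourierCoeff g)) (θ : ℝ) :
    HasSum (fun k : ℤ => fourierCoeff g k * cos (k * θ)) (f (cos θ)) := by
  have hfourier : ∀ (k : ℤ) (t : ℝ), fourier k (t : AddCircle (2 * π)) = exp (k * t * I) :=
    fun k t => by
      rw [fourier_coe_apply]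
      congr 1
      push_cast
      field_simp
  have hpos := has_pointwise_sum_fourier_series_of_summable hsum (θ : AddCircle (2 * π))
  have hneg := has_pointwise_sum_fourier_series_of_summable hsum ((-θ : ℝ) : AddCircle (2 * π))
  rw [hg] at hpos
  rw [hg, ofReal_neg, cos_neg] at hneg
  have havg := (hpos.add hneg).div_const 2
  rw [← two_mul, mul_div_cancel_left₀ _ two_ne_zero] at havg
  refine havg.congr_fun fun k => ?_
  rw [smul_eq_mul, smul_eq_mul, hfourier, hfourier, cos]
  push_cast
  ring_nf

theorem norm_sub_sum_range_le_of_norm_le_geometric {E : Type*} [SeminormedAddCommGroup E]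
    {d : ℕ → E} {s : E} {K q : ℝ} (hq : q < 1) (hd : ∀ m, ‖d m‖ ≤ K * q ^ m) (hs : HasSum d s)
    (n : ℕ) : ‖s - ∑ m ∈ Finset.range n, d m‖ ≤ K * q ^ n / (1 - q) := by
  rw [← dist_eq_norm, dist_comm]
  exact dist_le_of_le_geometric_of_tendsto q K hq
    (fun m => by simpa [dist_eq_norm', Finset.sum_range_succ] using hd m) hs.tendsto_sum_nat n

/-- The Fourier modes `m` and `-(m + 1)` are grouped so that the partial sum over `m < n` has
degree at most `n`. -/
noncomputable def chebyshevPairTerm (a : ℤ → ℂ) (m : ℕ) : ℂ[X] :=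
  C (a m) * Chebyshev.T ℂ m + C (a (-(m + 1))) * Chebyshev.T ℂ (m + 1)

theorem natDegree_chebyshevPairTerm_le (a : ℤ → ℂ) (m : ℕ) :
    (chebyshevPairTerm a m).natDegree ≤ m + 1 := by
  refine natDegree_add_le_of_degree_le ?_ ?_ <;> refine (natDegree_C_mul_le _ _).trans ?_ <;>
    rw [Chebyshev.natDegree_T] <;> omega

theorem eval_cos_chebyshevPairTerm (a : ℤ → ℂ) (m : ℕ) (θ : ℂ) :
    (chebyshevPairTerm a m).eval (cos θ) =
      a m * cos (m * θ) + a (-(m + 1)) * cos ((m + 1) * θ) := by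
  simp [chebyshevPairTerm, Chebyshev.T_complex_cos]

theorem norm_eval_chebyshevPairTerm_le (a : ℤ → ℂ) (m : ℕ) {y : ℝ} (hy : y ∈ Icc (-1) 1) :
    ‖(chebyshevPairTerm a m).eval (y : ℂ)‖ ≤ ‖a m‖ + ‖a (-(m + 1))‖ := by
  have hcos : ∀ x : ℝ, ‖cos x‖ ≤ 1 := fun x => by
    rw [← ofReal_cos, norm_real, Real.norm_eq_abs]; exact Real.abs_cos_le_one x
  rw [← Real.cos_arccos hy.1 hy.2, ofReal_cos, eval_cos_chebyshevPairTerm]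
  refine (norm_add_le _ _).trans (add_le_add ?_ ?_) <;> rw [norm_mul] <;>
    refine mul_le_of_le_one_right (norm_nonneg _) ?_
  · exact_mod_cast hcos (m * Real.arccos y)
  · exact_mod_cast hcos ((m + 1) * Real.arccos y)

theorem hasSum_eval_cos_chebyshevPairTerm {a : ℤ → ℂ} {s θ : ℂ}
    (hs : HasSum (fun k : ℤ => a k * cos (k * θ)) s) :
    HasSum (fun m => (chebyshevPairTerm a m).eval (cos θ)) s := by
  refine hs.nat_add_neg_add_one.congr_fun fun m => ?_
  rw [eval_cos_chebyshevPairTerm]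
  push_cast
  rw [neg_mul, cos_neg]

theorem Function.Periodic.exists_continuousMap_addCircle {E : Type*} [TopologicalSpace E]
    {φ : ℝ → E} {T : ℝ} (hper : Periodic φ T) (hφ : Continuous φ) :
    ∃ g : C(AddCircle T, E), ∀ t : ℝ, g t = φ t :=
  ⟨⟨hper.lift, hφ.quotient_liftOn' _⟩, fun _ => rfl⟩

theorem exists_norm_fourierCoeff_le_of_comp_cos {U : Set ℂ} (hU : IsOpen U)
    (hsub : ∀ y ∈ Icc (-1 : ℝ) 1, (y : ℂ) ∈ U) {f : ℂ → ℂ} (hf : ∀ z ∈ U, AnalyticAt ℂ f z)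
    {M : ℝ} (hM : ∀ z ∈ U, ‖f z‖ ≤ M) {g : AddCircle (2 * π) → ℂ}
    (hg : ∀ t : ℝ, g t = f (cos t)) :
    ∃ q ∈ Ioo (0 : ℝ) 1, ∀ k : ℤ, ‖fourierCoeff g k‖ ≤ M * q ^ k.natAbs := by
  obtain ⟨η, hη, hstrip⟩ : ∃ η > 0, ∀ z : ℂ, |z.im| ≤ η → cos z ∈ U :=
    (by simpa using cos_periodic : Periodic cos ((2 * π : ℝ) : ℂ)).exists_strip_mapsTo
      Real.two_pi_pos continuous_cos hU fun t => by
        rw [← ofReal_cos]; exact hsub _ ⟨Real.neg_one_le_cos t, Real.cos_le_one t⟩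
  refine ⟨Real.exp (-η), ⟨Real.exp_pos _, Real.exp_lt_one_iff.2 (neg_neg_of_pos hη)⟩, ?_⟩
  exact norm_fourierCoeff_le_exp_neg_pow (F := fun z => f (cos z))
    (fun z => by simp only [cos_periodic z]) hη.le
    (fun z hz => (hf _ (hstrip z hz)).differentiableAt.comp z differentiableAt_cos)
    (fun z hz => hM _ (hstrip z hz)) hg

theorem norm_sub_eval_sum_chebyshevPairTerm_le {f : ℂ → ℂ} {g : C(AddCircle (2 * π), ℂ)}
    (hg : ∀ t : ℝ, g t = f (cos t)) {K q : ℝ} (hq0 : 0 ≤ q) (hq1 : q < 1)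
    (ha : ∀ k, ‖fourierCoeff g k‖ ≤ K * q ^ k.natAbs) {y : ℝ} (hy : y ∈ Icc (-1) 1) (n : ℕ) :
    ‖f y - (∑ m ∈ Finset.range n, chebyshevPairTerm (fourierCoeff g) m).eval (y : ℂ)‖ ≤
      2 * K * q ^ n / (1 - q) := by
  set a := fourierCoeff g
  have hK : 0 ≤ K := by simpa using (norm_nonneg _).trans (ha 0)
  have hsum : Summable a := .of_norm_bounded ((summable_pow_natAbs hq0 hq1).mul_left K) ha
  have hseries : HasSum (fun m => (chebyshevPairTerm a m).eval (y : ℂ)) (f y) := by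
    have := hasSum_eval_cos_chebyshevPairTerm
      (hasSum_fourierCoeff_mul_cos hg hsum (Real.arccos y))
    rwa [← ofReal_cos, Real.cos_arccos hy.1 hy.2] at this
  have hterm : ∀ m, ‖(chebyshevPairTerm a m).eval (y : ℂ)‖ ≤ 2 * K * q ^ m := fun m => by
    have hpow : K * q ^ (m + 1) ≤ K * q ^ m :=
      mul_le_mul_of_nonneg_left (pow_le_pow_of_le_one hq0 hq1.le (Nat.le_succ m)) hK
    calc _ ≤ ‖a m‖ + ‖a (-(m + 1))‖ := norm_eval_chebyshevPairTerm_le a m hy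
      _ ≤ K * q ^ m + K * q ^ (m + 1) := by
        gcongr
        · simpa using ha m
        · have h := ha (-(m + 1))
          rwa [show (-((m : ℤ) + 1)).natAbs = m + 1 by omega] at h
      _ ≤ 2 * K * q ^ m := by linarith
  rw [eval_finsetSum]
  exact norm_sub_sum_range_le_of_norm_le_geometric hq1 hterm hseries n

theorem exists_polynomial_approx_Icc_neg_one_one {U : Set ℂ} (hU : IsOpen U)
    (hsub : ∀ y ∈ Icc (-1 : ℝ) 1, (y : ℂ) ∈ U) {f : ℂ → ℂ} (hf : ∀ z ∈ U, AnalyticAt ℂ f z)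
    {M : ℝ} (hM : ∀ z ∈ U, ‖f z‖ ≤ M) :
    ∃ C > 0, ∃ q ∈ Ioo (0 : ℝ) 1, ∀ n : ℕ, ∃ p : ℂ[X],
      p.natDegree ≤ n ∧ ∀ y ∈ Icc (-1 : ℝ) 1, ‖f y - p.eval (y : ℂ)‖ ≤ C * q ^ n := by
  have hcont : Continuous fun t : ℝ => f (cos t) := continuous_iff_continuousAt.2 fun t =>
    (hf _ (by rw [← ofReal_cos]; exact hsub _ ⟨Real.neg_one_le_cos t, Real.cos_le_one t⟩)
      ).continuousAt.comp (continuous_cos.comp continuous_ofReal).continuousAt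
  have hper : Periodic (fun t : ℝ => f (cos t)) (2 * π) := fun t => by
    simp only [ofReal_add, ofReal_mul, ofReal_ofNat, cos_periodic (t : ℂ)]
  obtain ⟨g, hg⟩ := hper.exists_continuousMap_addCircle hcont
  obtain ⟨q, ⟨hq0, hq1⟩, ha⟩ := exists_norm_fourierCoeff_le_of_comp_cos hU hsub hf
    (fun z hz => (hM z hz).trans (le_max_left M 1)) hg
  refine ⟨2 * max M 1 / (1 - q), by positivity, q, ⟨hq0, hq1⟩, fun n =>
    ⟨∑ m ∈ Finset.range n, chebyshevPairTerm (fourierCoeff g) m,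
    natDegree_sum_le_of_forall_le _ _ fun m hm =>
      (natDegree_chebyshevPairTerm_le _ m).trans (Finset.mem_range.1 hm), fun y hy => ?_⟩⟩
  exact (norm_sub_eval_sum_chebyshevPairTerm_le hg hq0.le hq1 ha hy n).trans_eq (by ring)

/-- A function analytic and bounded on an open neighborhood of the compact interval
`[0, Λ]` admits polynomial (hence rational) approximants of degree `≤ n` converging
geometrically, i.e. with sup-norm error `≤ C qⁿ` for some `C > 0` and `0 < q < 1`
independent of `n`. -/
theorem analytic_geometric_polynomial_approximation (Λ : ℝ) (hΛ : 0 < Λ)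
    (U : Set ℂ) (hU : IsOpen U)
    (hsub : ∀ x ∈ Set.Icc (0 : ℝ) Λ, (x : ℂ) ∈ U)
    (f : ℂ → ℂ) (hf : ∀ z ∈ U, AnalyticAt ℂ f z)
    (hbdd : ∃ Cb : ℝ, ∀ z ∈ U, ‖f z‖ ≤ Cb) :
    ∃ C > (0 : ℝ), ∃ q ∈ Set.Ioo (0 : ℝ) 1, ∀ n : ℕ, ∃ p : Polynomial ℂ,
      p.natDegree ≤ n ∧ ∀ x ∈ Set.Icc (0 : ℝ) Λ, ‖f (x : ℂ) - p.eval (x : ℂ)‖ ≤ C * q ^ n := by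
  obtain ⟨M, hM⟩ := hbdd
  set φ : ℂ → ℂ := fun w => Λ * (w + 1) / 2
  obtain ⟨A, hA, q, hq, happrox⟩ := exists_polynomial_approx_Icc_neg_one_one (U := φ ⁻¹' U)
    (f := f ∘ φ) (hU.preimage (by fun_prop))
    (fun y hy => by
      rw [mem_preimage]
      convert hsub (Λ * (y + 1) / 2) ⟨by nlinarith [hy.1], by nlinarith [hy.2]⟩ using 1
      push_cast [φ]; rfl)
    (fun z hz => (hf _ hz).comp (by fun_prop)) fun z hz => hM _ hz
  refine ⟨A, hA, q, hq, fun n => ?_⟩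
  obtain ⟨p, hpdeg, hp⟩ := happrox n
  refine ⟨p.comp (C (2 / Λ : ℂ) * X - 1), natDegree_comp_le.trans ?_, fun x hx => ?_⟩
  · have : (C (2 / Λ : ℂ) * X - 1).natDegree ≤ 1 := by compute_degree
    nlinarith
  · have hy : 2 * x / Λ - 1 ∈ Icc (-1 : ℝ) 1 := by
      constructor
      · have := div_nonneg (mul_nonneg zero_le_two hx.1) hΛ.le
        linarith
      · rw [sub_le_iff_le_add, div_le_iff₀ hΛ]
        linarith [hx.2]
    have hΛ' : (Λ : ℂ) ≠ 0 := ofReal_ne_zero.2 hΛ.ne'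
    convert hp _ hy using 3 <;> simp [φ] <;> field_simp
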